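/- Let U be a finite set of m points equipped with the uniform metric, i.e., d(a,b) = 1 for all distinct a, b ∈ U and d(a,a) = 0. Let T_1, T_2 be partially filled arrays of length n over U such that T_2 extends T_1 (T_2 agrees with T_1 on every cell filled in T_1) and the cells filled in T_2 but empty in T_1 are exactly m cells whose values enumerate U bijectively (each element of U appearing exactly once among the new cells). If G(T_1) ≤ m/8 and G(T_2) ≤ m/8, then c(T_2) − c(T_1) ≥ 3m/16. -/

import Mathlib

noncomputable def optDist {M : Type*} [MetricSpace M] : Option M → Option M → ℝ
  | some a, some b => dist a b
  | _, _ => 0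

/-- The cost of a partially filled array: the sum of distances between consecutive
non-empty cells. -/
noncomputable def partialCost {M : Type*} [MetricSpace M] {n : ℕ} (T : Fin n → Option M) : ℝ :=
  ∑ i : Fin (n - 1),
    optDist (T ⟨i.val, by have := i.isLt; omega⟩) (T ⟨i.val + 1, by have := i.isLt; omega⟩)

/-- The number of gaps (maximal nonempty runs of consecutive empty cells) of a
partially filled array. -/
noncomputable def gaps {M : Type*} {n : ℕ} (T : Fin n → Option M) : ℕ :=
  Set.ncard {i : Fin n | T i = none ∧
    (i.val = 0 ∨ T ⟨i.val - 1, by have := i.isLt; omega⟩ ≠ none)}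

open Classical in
noncomputable def runStart {M : Type*} (T : ℕ → Option M) : ℕ → ℕ
  | 0 => 0
  | k + 1 => if T k = none then runStart T k else k + 1

theorem runStart_le {M : Type*} (T : ℕ → Option M) : ∀ k, runStart T k ≤ k
  | 0 => le_refl 0
  | k + 1 => by
    unfold runStart
    split
    · exact (runStart_le T k).trans (Nat.le_succ k)
    · exact le_refl _

theorem runStart_empty {M : Type*} (T : ℕ → Option M) :
    ∀ k, T k = none → ∀ j, runStart T k ≤ j → j ≤ k → T j = none
  | 0, hk, j, h1, h2 => by
    have : j = 0 := Nat.le_zero.mp h2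
    simpa [this] using hk
  | k + 1, hk, j, h1, h2 => by
    unfold runStart at h1
    split at h1
    · rcases Nat.lt_or_ge j (k+1) with h | h
      · exact runStart_empty T k (by assumption) j h1 (by omega)
      · have : j = k + 1 := by omega
        simpa [this] using hk
    · have : j = k + 1 := by omega
      simpa [this] using hk

theorem runStart_start {M : Type*} (T : ℕ → Option M) :
    ∀ k, T k = none → runStart T k = 0 ∨ T (runStart T k - 1) ≠ none
  | 0, hk => Or.inl rfl
  | k + 1, hk => by
    unfold runStart
    split
    · exact runStart_start T k (by assumption)
    · right; simpa using (by assumption : ¬ T k = none)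

theorem optDist_nonneg {M : Type*} [MetricSpace M] (a b : Option M) : 0 ≤ optDist a b := by
  cases a <;> cases b <;> simp [optDist, dist_nonneg]

theorem optDist_none_left {M : Type*} [MetricSpace M] (b : Option M) : optDist none b = 0 := by
  cases b <;> rfl

theorem optDist_none_right {M : Type*} [MetricSpace M] (a : Option M) : optDist a none = 0 := by
  cases a <;> rfl


/-- Let `U` be a set of `m` points with the uniform metric, and let
`T₂` be obtained from the partially filled array `T₁` by inserting one copy of each
element of `U` into empty cells. If `G(T₁) ≤ m/8` and `G(T₂) ≤ m/8`, then
`c(T₂) − c(T₁) ≥ 3m/16`. -/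
theorem epoch_insertion_cost {U : Type*} [MetricSpace U] [Fintype U] (m n : ℕ)
    (hcard : Fintype.card U = m)
    (huniform : ∀ a b : U, a ≠ b → dist a b = 1)
    (T₁ T₂ : Fin n → Option U)
    (hext : ∀ i, T₁ i ≠ none → T₂ i = T₁ i)
    (hnew : ∀ u : U, ∃! i : Fin n, T₁ i = none ∧ T₂ i = some u)
    (hG₁ : (gaps T₁ : ℝ) ≤ m / 8) (hG₂ : (gaps T₂ : ℝ) ≤ m / 8) :
    3 * m / 16 ≤ partialCost T₂ - partialCost T₁ := by
  classical
  -- the set of new cells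
  set N : Set (Fin n) := {i | T₁ i = none ∧ T₂ i ≠ none} with hN
  -- interior edges of runs of new cells
  set S : Set (Fin (n-1)) := {j | T₁ ⟨j.val, by have := j.isLt; omega⟩ = none ∧
      T₁ ⟨j.val + 1, by have := j.isLt; omega⟩ = none ∧
      T₂ ⟨j.val, by have := j.isLt; omega⟩ ≠ none ∧
      T₂ ⟨j.val + 1, by have := j.isLt; omega⟩ ≠ none} with hS
  choose e he1 huniq using hnew
  -- Step 1: N has exactly m elements
  have hNcard : N.ncard = m := by
    have heinj : Function.Injective e := by
      intro u v huv
      have h1 := (he1 u).2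
      have h2 := (he1 v).2
      rw [huv, h2] at h1
      exact (Option.some_injective U h1.symm)
    have hrange : N = Set.range e := by
      ext i
      constructor
      · rintro ⟨h1, h2⟩
        obtain ⟨u, hu⟩ := Option.ne_none_iff_exists'.mp h2
        exact ⟨u, (huniq u i ⟨h1, hu⟩).symm⟩
      · rintro ⟨u, rfl⟩
        exact ⟨(he1 u).1, by simp [(he1 u).2]⟩
    rw [hrange, ← Set.image_univ, Set.ncard_image_of_injective _ heinj, Set.ncard_univ,
      Nat.card_eq_fintype_card, hcard]
  -- Step 2: counting. m ≤ |S| + gaps T₁ + gaps T₂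
  have hcount : m ≤ S.ncard + gaps T₁ + gaps T₂ := by
    set T' : ℕ → Option U := fun k => if h : k < n then T₂ ⟨k, h⟩ else none with hT'
    set Ng1 : Set (Fin n) := {i | i ∈ N ∧ (i.val = 0 ∨
        T₁ ⟨i.val - 1, by have := i.isLt; omega⟩ ≠ none)} with hNg1
    set Ng2 : Set (Fin n) := {i | i ∈ N ∧ 0 < i.val ∧
        T₁ ⟨i.val - 1, by have := i.isLt; omega⟩ = none ∧
        T₂ ⟨i.val - 1, by have := i.isLt; omega⟩ = none} with hNg2
    set Nint : Set (Fin n) := {i | i ∈ N ∧ 0 < i.val ∧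
        T₁ ⟨i.val - 1, by have := i.isLt; omega⟩ = none ∧
        T₂ ⟨i.val - 1, by have := i.isLt; omega⟩ ≠ none} with hNint
    have hcover : N ⊆ Ng1 ∪ Ng2 ∪ Nint := by
      intro i hi
      by_cases h0 : i.val = 0
      · exact Or.inl (Or.inl ⟨hi, Or.inl h0⟩)
      by_cases h1 : T₁ ⟨i.val - 1, by have := i.isLt; omega⟩ = none
      · by_cases h2 : T₂ ⟨i.val - 1, by have := i.isLt; omega⟩ = none
        · exact Or.inl (Or.inr ⟨hi, Nat.pos_of_ne_zero h0, h1, h2⟩)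
        · exact Or.inr ⟨hi, Nat.pos_of_ne_zero h0, h1, h2⟩
      · exact Or.inl (Or.inl ⟨hi, Or.inr h1⟩)
    have h1 : Ng1.ncard ≤ gaps T₁ := by
      rw [gaps]
      apply Set.ncard_le_ncard _ (Set.toFinite _)
      rintro i ⟨hi, hcond⟩
      exact ⟨hi.1, hcond⟩
    have h2 : Ng2.ncard ≤ gaps T₂ := by
      rw [gaps]
      apply Set.ncard_le_ncard_of_injOn
        (fun i => (⟨runStart T' (i.val - 1), by
          have := runStart_le T' (i.val - 1); have := i.isLt; omega⟩ : Fin n))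
      · rintro i ⟨hiN, hipos, hiT₁, hiT₂⟩
        have hk : T' (i.val - 1) = none := by
          rw [hT']
          simp only [dif_pos (show i.val - 1 < n by have := i.isLt; omega)]
          exact hiT₂
        have hrle := runStart_le T' (i.val - 1)
        constructor
        · have := runStart_empty T' (i.val - 1) hk (runStart T' (i.val - 1)) le_rfl hrle
          rw [hT'] at this
          simp only [dif_pos (show runStart T' (i.val - 1) < n by have := i.isLt; omega)] at this
          exact (dif_pos (show runStart T' (i.val - 1) < n by have := i.isLt; omega)).symm.trans this
        · rcases runStart_start T' (i.val - 1) hk with h | h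
          · exact Or.inl h
          · right
            rw [hT'] at h
            simp only [dif_pos (show runStart T' (i.val - 1) - 1 < n by
              have := i.isLt; omega)] at h
            exact fun hh => h ((dif_pos (show runStart T' (i.val - 1) - 1 < n by
              have := i.isLt; omega)).trans hh)
      · intro i hi i' hi' heq
        have hval : runStart T' (i.val - 1) = runStart T' (i'.val - 1) := congrArg Fin.val heq
        rcases lt_trichotomy i.val i'.val with h | h | h
        · exfalso
          have hk' : T' (i'.val - 1) = none := by
            rw [hT']
            simp only [dif_pos (show i'.val - 1 < n by have := i'.isLt; omega)]
            exact hi'.2.2.2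
          have hle : runStart T' (i'.val - 1) ≤ i.val := by
            rw [← hval]
            have := runStart_le T' (i.val - 1)
            have := hi.2.1
            omega
          have := runStart_empty T' (i'.val - 1) hk' i.val hle (by omega)
          rw [hT'] at this
          simp only [dif_pos i.isLt] at this
          rw [Fin.eta] at this
          exact hi.1.2 this
        · exact Fin.ext h
        · exfalso
          have hk : T' (i.val - 1) = none := by
            rw [hT']
            simp only [dif_pos (show i.val - 1 < n by have := i.isLt; omega)]
            exact hi.2.2.2
          have hle : runStart T' (i.val - 1) ≤ i'.val := by
            rw [hval]
            have := runStart_le T' (i'.val - 1)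
            have := hi'.2.1
            omega
          have := runStart_empty T' (i.val - 1) hk i'.val hle (by omega)
          rw [hT'] at this
          simp only [dif_pos i'.isLt] at this
          rw [Fin.eta] at this
          exact hi'.1.2 this
    have h3 : Nint.ncard ≤ S.ncard := by
      rcases Set.eq_empty_or_nonempty Nint with he | ⟨i₀, hi₀⟩
      · simp [he]
      have hn2 : 2 ≤ n := by
        have := i₀.isLt
        have := hi₀.2.1
        omega
      apply Set.ncard_le_ncard_of_injOn
        (fun i => (⟨i.val - 1, by have := i.isLt; omega⟩ : Fin (n-1)))
      · rintro i ⟨⟨hiN1, hiN2⟩, hipos, hiT₁, hiT₂⟩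
        have hplus : (⟨i.val - 1 + 1, by have := i.isLt; omega⟩ : Fin n) = i := by
          apply Fin.ext
          simp only []
          omega
        refine ⟨hiT₁, ?_, hiT₂, ?_⟩
        · show T₁ ⟨i.val - 1 + 1, _⟩ = none
          rw [hplus]; exact hiN1
        · show T₂ ⟨i.val - 1 + 1, _⟩ ≠ none
          rw [hplus]; exact hiN2
      · intro i hi i' hi' heq
        have hval : i.val - 1 = i'.val - 1 := congrArg Fin.val heq
        have := hi.2.1
        have := hi'.2.1
        apply Fin.ext
        omega
    calc m = N.ncard := hNcard.symm
      _ ≤ (Ng1 ∪ Ng2 ∪ Nint).ncard := Set.ncard_le_ncard hcover (Set.toFinite _)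
      _ ≤ (Ng1 ∪ Ng2).ncard + Nint.ncard := Set.ncard_union_le _ _
      _ ≤ Ng1.ncard + Ng2.ncard + Nint.ncard := by
          have := Set.ncard_union_le Ng1 Ng2
          omega
      _ ≤ S.ncard + gaps T₁ + gaps T₂ := by omega
  -- Step 3: cost bound. |S| ≤ cost difference
  have hcost : (S.ncard : ℝ) ≤ partialCost T₂ - partialCost T₁ := by
    have hdiff : partialCost T₂ - partialCost T₁ =
        ∑ j : Fin (n-1), (optDist (T₂ ⟨j.val, by have := j.isLt; omega⟩)
            (T₂ ⟨j.val + 1, by have := j.isLt; omega⟩)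
          - optDist (T₁ ⟨j.val, by have := j.isLt; omega⟩)
            (T₁ ⟨j.val + 1, by have := j.isLt; omega⟩)) := by
      rw [partialCost, partialCost, ← Finset.sum_sub_distrib]
    have key1 : ∀ j : Fin (n-1), 0 ≤ optDist (T₂ ⟨j.val, by have := j.isLt; omega⟩)
            (T₂ ⟨j.val + 1, by have := j.isLt; omega⟩)
          - optDist (T₁ ⟨j.val, by have := j.isLt; omega⟩)
            (T₁ ⟨j.val + 1, by have := j.isLt; omega⟩) := by
      intro j
      by_cases h1 : T₁ ⟨j.val, by have := j.isLt; omega⟩ = none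
      · rw [h1, optDist_none_left]
        have := optDist_nonneg (T₂ (⟨j.val, by have := j.isLt; omega⟩ : Fin n))
          (T₂ ⟨j.val + 1, by have := j.isLt; omega⟩)
        linarith
      · by_cases h2 : T₁ ⟨j.val + 1, by have := j.isLt; omega⟩ = none
        · rw [h2, optDist_none_right]
          have := optDist_nonneg (T₂ (⟨j.val, by have := j.isLt; omega⟩ : Fin n))
            (T₂ ⟨j.val + 1, by have := j.isLt; omega⟩)
          linarith
        · rw [hext _ h1, hext _ h2]
          simp
    have key2 : ∀ j ∈ S.toFinset, (1:ℝ) ≤ optDist (T₂ ⟨j.val, by have := j.isLt; omega⟩)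
            (T₂ ⟨j.val + 1, by have := j.isLt; omega⟩)
          - optDist (T₁ ⟨j.val, by have := j.isLt; omega⟩)
            (T₁ ⟨j.val + 1, by have := j.isLt; omega⟩) := by
      intro j hj
      rw [Set.mem_toFinset, hS] at hj
      obtain ⟨h1, h2, h3, h4⟩ := hj
      obtain ⟨u, hu⟩ := Option.ne_none_iff_exists'.mp h3
      obtain ⟨v, hv⟩ := Option.ne_none_iff_exists'.mp h4
      have huv : u ≠ v := by
        intro h
        subst h
        have e1 := huniq u _ ⟨h1, hu⟩
        have e2 := huniq u _ ⟨h2, hv⟩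
        rw [← e2] at e1
        have : j.val = j.val + 1 := congrArg Fin.val e1
        omega
      rw [h1, hu, hv, optDist_none_left]
      show (1:ℝ) ≤ dist u v - 0
      rw [huniform u v huv]
      norm_num
    calc (S.ncard : ℝ) = ∑ _j ∈ S.toFinset, (1:ℝ) := by
          rw [Finset.sum_const, nsmul_eq_mul, mul_one, Set.ncard_eq_toFinset_card']
        _ ≤ ∑ j ∈ S.toFinset, (optDist (T₂ ⟨j.val, by have := j.isLt; omega⟩)
            (T₂ ⟨j.val + 1, by have := j.isLt; omega⟩)
          - optDist (T₁ ⟨j.val, by have := j.isLt; omega⟩)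
            (T₁ ⟨j.val + 1, by have := j.isLt; omega⟩)) := Finset.sum_le_sum key2
        _ ≤ ∑ j : Fin (n-1), _ := Finset.sum_le_sum_of_subset_of_nonneg
            (Finset.subset_univ _) (fun j _ _ => key1 j)
        _ = partialCost T₂ - partialCost T₁ := hdiff.symm
  have h8 : (0:ℝ) ≤ m := by positivity
  have : (m : ℝ) ≤ (S.ncard : ℝ) + gaps T₁ + gaps T₂ := by exact_mod_cast hcount
  linarith
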